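/- arXiv:1802.06579 — 9 statements merged into one kernel-verified Lean document; each statement's English description precedes it below -/
import Mathlib

section
/- Let G be a finite simple graph and let p and q be two planar straight-line drawings of G such that (p v).2 = (q v).2 for every vertex v. Call an object of a drawing either a vertex (whose image is a point) or an edge (whose image is the closed segment between the images of its endpoints), and for c ∈ ℝ say that an object O₁ lies left of an object O₂ on the horizontal line y = c in a drawing if both images meet this line and every point of the image of O₁ on the line has strictly smaller first coordinate than every point of the image of O₂ on the line. If for every c ∈ ℝ and every pair of distinct objects O₁, O₂ of G, the object O₁ lies left of O₂ on the line y = c in p if and only if O₁ lies left of O₂ on the line y = c in q, then the linear morph ⟨p, q⟩ is planar (and it is horizontal). -/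
/-!
On a horizontal line `y = c`, the objects of a planar drawing meet the line in pairwise disjoint
intervals, so any two of them are ordered from left to right. As the morph is horizontal, a point
at height `c` of an object in `p_t` is `(1 - t) a + t b` with `a`, `b` points at height `c` of the
same object in `p` and in `q`; hence when two objects are in the same order on the line in `p` and
in `q`, they keep that order, and stay disjoint, in every `p_t`.

The condition on edges with a common endpoint `w` needs no separate argument: two segments issuing
from `w` that meet outside `w` point in the same direction, so one of them contains the far
endpoint of the other, which is excluded by the condition on vertices and edges.
-/

/-- A straight-line drawing `p : V → ℝ × ℝ` of a simple graph `G` is planar if it is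
injective, no vertex lies on the (closed) segment of an edge it is not an endpoint of,
segments of edges sharing no endpoint are disjoint, and segments of distinct edges
sharing exactly one endpoint `w` meet exactly in the point `p w`. -/
def IsPlanarDrawing {V : Type*} (G : SimpleGraph V) (p : V → ℝ × ℝ) : Prop :=
  Function.Injective p ∧
  (∀ u v w : V, G.Adj u v → w ≠ u → w ≠ v → p w ∉ segment ℝ (p u) (p v)) ∧
  (∀ u v w z : V, G.Adj u v → G.Adj w z → u ≠ w → u ≠ z → v ≠ w → v ≠ z →
    Disjoint (segment ℝ (p u) (p v)) (segment ℝ (p w) (p z))) ∧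
  (∀ w u v : V, G.Adj w u → G.Adj w v → u ≠ v →
    segment ℝ (p w) (p u) ∩ segment ℝ (p w) (p v) = {p w})

/-- The intermediate drawing at time `t` of the linear morph `⟨p, q⟩`. -/
def morphAt {V : Type*} (p q : V → ℝ × ℝ) (t : ℝ) : V → ℝ × ℝ :=
  fun v => (1 - t) • p v + t • q v

/-- The linear morph `⟨p, q⟩` is planar if every intermediate drawing is planar. -/
def IsPlanarMorph {V : Type*} (G : SimpleGraph V) (p q : V → ℝ × ℝ) : Prop :=
  ∀ t ∈ Set.Icc (0 : ℝ) 1, IsPlanarDrawing G (morphAt p q t)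

/-- The linear morph `⟨p, q⟩` is horizontal if every vertex keeps its `y`-coordinate. -/
def IsHorizontalMorph {V : Type*} (p q : V → ℝ × ℝ) : Prop :=
  ∀ v, (p v).2 = (q v).2

/-- The image of an object (a vertex or an edge) of `G` in the drawing `p`:
the image of a vertex is a point, the image of an edge is the closed segment
between the images of its endpoints. -/
def objImage {V : Type*} (G : SimpleGraph V) (p : V → ℝ × ℝ) :
    V ⊕ G.edgeSet → Set (ℝ × ℝ)
  | Sum.inl v => {p v}
  | Sum.inr e => Sym2.lift ⟨fun u v => segment ℝ (p u) (p v),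
      fun u v => segment_symm ℝ (p u) (p v)⟩ e.1

/-- The set `S` lies left of the set `T` on the horizontal line `y = c`:
both sets meet the line, and every point of `S` on the line has strictly smaller
first coordinate than every point of `T` on the line. -/
def LeftOfAt (c : ℝ) (S T : Set (ℝ × ℝ)) : Prop :=
  (∃ s ∈ S, s.2 = c) ∧ (∃ t ∈ T, t.2 = c) ∧
  (∀ s ∈ S, s.2 = c → ∀ t ∈ T, t.2 = c → s.1 < t.1)

open Set

theorem Set.OrdConnected.forall_lt_or_forall_gt_of_disjoint {α : Type*} [LinearOrder α]
    {I J : Set α} (hI : I.OrdConnected) (hJ : J.OrdConnected) (hIJ : Disjoint I J) :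
    (∀ x ∈ I, ∀ y ∈ J, x < y) ∨ (∀ x ∈ I, ∀ y ∈ J, y < x) := by
  by_contra! ⟨⟨x₁, hx₁, y₁, hy₁, hyx₁⟩, ⟨x₂, hx₂, y₂, hy₂, hxy₂⟩⟩
  rcases le_total x₂ y₁ with h | h
  · exact hIJ.notMem_of_mem_right hy₁ (hI.out hx₂ hx₁ ⟨h, hyx₁⟩)
  · exact hIJ.notMem_of_mem_left hx₂ (hJ.out hy₁ hy₂ ⟨h, hxy₂⟩)

theorem segment_inter_segment_eq_singleton {𝕜 E : Type*} [Field 𝕜] [LinearOrder 𝕜]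
    [IsStrictOrderedRing 𝕜] [AddCommGroup E] [Module 𝕜 E] {w u v : E}
    (hu : u ∉ segment 𝕜 w v) (hv : v ∉ segment 𝕜 w u) :
    segment 𝕜 w u ∩ segment 𝕜 w v = {w} := by
  refine Subset.antisymm (fun z ⟨hzu, hzv⟩ => ?_) ?_
  · by_contra hzw
    have hray : SameRay 𝕜 (u -ᵥ w) (v -ᵥ w) :=
      ((mem_segment_iff_wbtw.mp hzu).sameRay_vsub_left.symm.trans
        (mem_segment_iff_wbtw.mp hzv).sameRay_vsub_left
        fun h => absurd (vsub_eq_zero_iff_eq.mp h) hzw)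
    rcases wbtw_total_of_sameRay_vsub_left hray with h | h
    · exact hu h.mem_segment
    · exact hv h.mem_segment
  · exact singleton_subset_iff.mpr ⟨left_mem_segment 𝕜 w u, left_mem_segment 𝕜 w v⟩

theorem leftOfAt_or_leftOfAt_of_disjoint {S T : Set (ℝ × ℝ)} (hS : Convex ℝ S) (hT : Convex ℝ T)
    (hST : Disjoint S T) {c : ℝ} (hSc : ∃ s ∈ S, s.2 = c) (hTc : ∃ t ∈ T, t.2 = c) :
    LeftOfAt c S T ∨ LeftOfAt c T S := by
  have slice_ordConnected : ∀ {R : Set (ℝ × ℝ)}, Convex ℝ R → ((·, c) ⁻¹' R).OrdConnected :=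
    fun hR => ⟨fun x hx y hy z hz => hR.segment_subset hx hy <| by
      rw [← Prod.image_mk_segment_left, segment_eq_Icc (hz.1.trans hz.2)]
      exact mem_image_of_mem _ hz⟩
  have mem_slice : ∀ {R : Set (ℝ × ℝ)} {s : ℝ × ℝ}, s ∈ R → s.2 = c → s.1 ∈ (·, c) ⁻¹' R :=
    fun hs hsc => by subst hsc; exact hs
  rcases (slice_ordConnected hS).forall_lt_or_forall_gt_of_disjoint (slice_ordConnected hT)
    (hST.preimage _) with h | h
  · exact .inl ⟨hSc, hTc, fun s hs hsc t ht htc => h _ (mem_slice hs hsc) _ (mem_slice ht htc)⟩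
  · exact .inr ⟨hTc, hSc, fun t ht htc s hs hsc => h _ (mem_slice hs hsc) _ (mem_slice ht htc)⟩

def SameHorizontalOrder {V : Type*} (G : SimpleGraph V) (p q : V → ℝ × ℝ) : Prop :=
  ∀ (c : ℝ) (O₁ O₂ : V ⊕ G.edgeSet), O₁ ≠ O₂ →
    (LeftOfAt c (objImage G p O₁) (objImage G p O₂) ↔
      LeftOfAt c (objImage G q O₁) (objImage G q O₂))

section Morph

variable {V : Type*} {G : SimpleGraph V} {p q : V → ℝ × ℝ} {t : ℝ}

theorem convex_objImage (r : V → ℝ × ℝ) : ∀ O, Convex ℝ (objImage G r O)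
  | .inl v => convex_singleton (r v)
  | .inr ⟨e, he⟩ => by
    induction e using Sym2.ind
    exact convex_segment _ _

theorem objImage_nonempty (r : V → ℝ × ℝ) : ∀ O, (objImage G r O).Nonempty
  | .inl v => singleton_nonempty (r v)
  | .inr ⟨e, he⟩ => by
    induction e using Sym2.ind
    exact ⟨_, left_mem_segment ℝ _ _⟩

theorem exists_of_mem_objImage_morphAt (hy : ∀ v, (p v).2 = (q v).2) {O : V ⊕ G.edgeSet}
    {z : ℝ × ℝ} (hz : z ∈ objImage G (morphAt p q t) O) :
    ∃ a ∈ objImage G p O, ∃ b ∈ objImage G q O,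
      a.2 = z.2 ∧ b.2 = z.2 ∧ z.1 = (1 - t) * a.1 + t * b.1 := by
  rcases O with v | ⟨e, he⟩
  · obtain rfl : z = morphAt p q t v := hz
    refine ⟨p v, rfl, q v, rfl, ?_, ?_, ?_⟩ <;> simp [morphAt, hy] <;> ring
  · induction e using Sym2.ind with | _ u v => ?_
    obtain ⟨α, β, hα, hβ, hαβ, rfl⟩ := hz
    refine ⟨α • p u + β • p v, ⟨α, β, hα, hβ, hαβ, rfl⟩,
      α • q u + β • q v, ⟨α, β, hα, hβ, hαβ, rfl⟩, ?_, ?_, ?_⟩ <;> simp [morphAt, hy] <;> ring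

theorem fst_lt_of_leftOfAt_of_mem_objImage_morphAt (hy : ∀ v, (p v).2 = (q v).2)
    (ht : t ∈ Icc (0 : ℝ) 1) {c : ℝ} {O₁ O₂ : V ⊕ G.edgeSet}
    (hp : LeftOfAt c (objImage G p O₁) (objImage G p O₂))
    (hq : LeftOfAt c (objImage G q O₁) (objImage G q O₂)) {z₁ z₂ : ℝ × ℝ}
    (hz₁ : z₁ ∈ objImage G (morphAt p q t) O₁) (hz₂ : z₂ ∈ objImage G (morphAt p q t) O₂)
    (hc₁ : z₁.2 = c) (hc₂ : z₂.2 = c) : z₁.1 < z₂.1 := by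
  obtain ⟨a₁, ha₁, b₁, hb₁, ha₁c, hb₁c, hz₁⟩ := exists_of_mem_objImage_morphAt hy hz₁
  obtain ⟨a₂, ha₂, b₂, hb₂, ha₂c, hb₂c, hz₂⟩ := exists_of_mem_objImage_morphAt hy hz₂
  have ha : a₁.1 < a₂.1 := hp.2.2 a₁ ha₁ (ha₁c.trans hc₁) a₂ ha₂ (ha₂c.trans hc₂)
  have hb : b₁.1 < b₂.1 := hq.2.2 b₁ hb₁ (hb₁c.trans hc₁) b₂ hb₂ (hb₂c.trans hc₂)
  rw [hz₁, hz₂]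
  rcases ht.1.eq_or_lt with rfl | ht₀
  · simpa using ha
  · exact add_lt_add_of_le_of_lt (mul_le_mul_of_nonneg_left ha.le (sub_nonneg.2 ht.2))
      (mul_lt_mul_of_pos_left hb ht₀)

theorem disjoint_objImage_morphAt (hy : ∀ v, (p v).2 = (q v).2)
    (horder : SameHorizontalOrder G p q) (ht : t ∈ Icc (0 : ℝ) 1) {O₁ O₂ : V ⊕ G.edgeSet}
    (hd : Disjoint (objImage G p O₁) (objImage G p O₂)) :
    Disjoint (objImage G (morphAt p q t) O₁) (objImage G (morphAt p q t) O₂) := by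
  refine disjoint_left.mpr fun z hz₁ hz₂ => ?_
  have hne : O₁ ≠ O₂ := by
    rintro rfl
    exact (objImage_nonempty p O₁).ne_empty (disjoint_self.mp hd)
  obtain ⟨a₁, ha₁, -, -, ha₁z, -⟩ := exists_of_mem_objImage_morphAt hy hz₁
  obtain ⟨a₂, ha₂, -, -, ha₂z, -⟩ := exists_of_mem_objImage_morphAt hy hz₂
  rcases leftOfAt_or_leftOfAt_of_disjoint (convex_objImage p O₁) (convex_objImage p O₂) hd
    ⟨a₁, ha₁, ha₁z⟩ ⟨a₂, ha₂, ha₂z⟩ with h | h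
  · exact (fst_lt_of_leftOfAt_of_mem_objImage_morphAt hy ht h ((horder _ _ _ hne).mp h)
      hz₁ hz₂ rfl rfl).false
  · exact (fst_lt_of_leftOfAt_of_mem_objImage_morphAt hy ht h ((horder _ _ _ hne.symm).mp h)
      hz₂ hz₁ rfl rfl).false

theorem isPlanarDrawing_of_notMem_segment {r : V → ℝ × ℝ} (hinj : Function.Injective r)
    (hvert : ∀ u v w : V, G.Adj u v → w ≠ u → w ≠ v → r w ∉ segment ℝ (r u) (r v))
    (hedge : ∀ u v w z : V, G.Adj u v → G.Adj w z → u ≠ w → u ≠ z → v ≠ w → v ≠ z →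
      Disjoint (segment ℝ (r u) (r v)) (segment ℝ (r w) (r z))) :
    IsPlanarDrawing G r :=
  ⟨hinj, hvert, hedge, fun w u v hwu hwv huv =>
    segment_inter_segment_eq_singleton (hvert w v u hwv hwu.ne' huv)
      (hvert w u v hwu hwv.ne' huv.symm)⟩

theorem isPlanarDrawing_morphAt (hp : IsPlanarDrawing G p) (hy : ∀ v, (p v).2 = (q v).2)
    (horder : SameHorizontalOrder G p q) (ht : t ∈ Icc (0 : ℝ) 1) :
    IsPlanarDrawing G (morphAt p q t) := by
  obtain ⟨hinj, hvert, hedge, -⟩ := hp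
  have hdisj {O₁ O₂ : V ⊕ G.edgeSet} :=
    disjoint_objImage_morphAt (O₁ := O₁) (O₂ := O₂) hy horder ht
  refine isPlanarDrawing_of_notMem_segment (fun u v huv => ?_) (fun u v w huv hwu hwv => ?_)
    (fun u v w z huv hwz h₁ h₂ h₃ h₄ => ?_)
  · by_contra hne
    exact disjoint_singleton.mp (hdisj (O₁ := .inl u) (O₂ := .inl v)
      (disjoint_singleton.mpr (hinj.ne hne))) huv
  · exact disjoint_singleton_left.mp (hdisj (O₁ := .inl w) (O₂ := .inr ⟨s(u, v), huv⟩)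
      (disjoint_singleton_left.mpr (hvert u v w huv hwu hwv)))
  · exact hdisj (O₁ := .inr ⟨s(u, v), huv⟩) (O₂ := .inr ⟨s(w, z), hwz⟩)
      (hedge u v w z huv hwz h₁ h₂ h₃ h₄)

end Morph

theorem linear_morph_planar_of_same_horizontal_order_general
    {V : Type*} (G : SimpleGraph V) (p q : V → ℝ × ℝ)
    (hp : IsPlanarDrawing G p)
    (hy : ∀ v, (p v).2 = (q v).2)
    (horder : ∀ (c : ℝ) (O₁ O₂ : V ⊕ G.edgeSet), O₁ ≠ O₂ →
      (LeftOfAt c (objImage G p O₁) (objImage G p O₂) ↔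
        LeftOfAt c (objImage G q O₁) (objImage G q O₂))) :
    IsPlanarMorph G p q ∧ IsHorizontalMorph p q :=
  ⟨fun _ ht => isPlanarDrawing_morphAt hp hy horder ht, hy⟩

/-- If two planar straight-line drawings `p`, `q` of `G` agree on all `y`-coordinates
and every horizontal line crosses the same ordered sequence of objects (vertices and
edges) in both drawings, then the linear morph `⟨p, q⟩` is planar and horizontal. -/
theorem linear_morph_planar_of_same_horizontal_order
    {V : Type*} [Fintype V] (G : SimpleGraph V) (p q : V → ℝ × ℝ)
    (hp : IsPlanarDrawing G p) (hq : IsPlanarDrawing G q)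
    (hy : ∀ v, (p v).2 = (q v).2)
    (horder : ∀ (c : ℝ) (O₁ O₂ : V ⊕ G.edgeSet), O₁ ≠ O₂ →
      (LeftOfAt c (objImage G p O₁) (objImage G p O₂) ↔
        LeftOfAt c (objImage G q O₁) (objImage G q O₂))) :
    IsPlanarMorph G p q ∧ IsHorizontalMorph p q :=
  linear_morph_planar_of_same_horizontal_order_general G p q hp hy horder
end

section
/- Let G be a finite simple graph and let p₁, p₂, p₃ be three planar straight-line drawings of G such that the linear morphs ⟨p₁, p₂⟩ and ⟨p₂, p₃⟩ are both horizontal and planar. Then the linear morph ⟨p₁, p₃⟩ is horizontal and planar. -/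
/-!
A drawing `r` fails to be planar exactly when one of a family of linear combinations
`Φ r = ∑ cᵢ • r vᵢ` of vertex positions vanishes, the family not depending on `r`. Since `Φ` is
linear, `⟨p, q⟩` is a planar morph iff `0 ∉ [Φ p, Φ q]` for every such `Φ`. The coefficients are
scalars, so along horizontal morphs the points `Φ p₁, Φ p₂, Φ p₃` lie on one horizontal line,
where `[Φ p₁, Φ p₃] ⊆ [Φ p₁, Φ p₂] ∪ [Φ p₂, Φ p₃]`.
-/

open Set

theorem Prod.segment_subset_union_of_snd_eq {𝕜 F : Type*} [Field 𝕜] [LinearOrder 𝕜]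
    [IsStrictOrderedRing 𝕜] [AddCommGroup F] [Module 𝕜 F] {a b c : 𝕜 × F}
    (hab : a.2 = b.2) (hbc : b.2 = c.2) : segment 𝕜 a c ⊆ segment 𝕜 a b ∪ segment 𝕜 b c := by
  obtain ⟨a, y⟩ := a
  obtain ⟨b, y'⟩ := b
  obtain ⟨c, y''⟩ := c
  dsimp only at hab hbc
  subst hab hbc
  simp only [← Prod.image_mk_segment_left, ← image_union, segment_eq_uIcc]
  exact image_mono uIcc_subset_uIcc_union_uIcc

section Obstructions

variable {V : Type*}

local notation "π" => LinearMap.proj (R := ℝ) (φ := fun _ : V => ℝ × ℝ)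

/-- In `edgeOverlap`, `b • (r u - r w) = d • (r v - r w)` says that the segments of the edges
`wu` and `wv` share a point other than `r w`. -/
inductive PlanarityObstruction (G : SimpleGraph V) : ((V → ℝ × ℝ) →ₗ[ℝ] ℝ × ℝ) → Prop
  | coincidence {u v : V} : u ≠ v → PlanarityObstruction G (π u - π v)
  | vertexOnEdge {u v w : V} {a b : ℝ} : G.Adj u v → w ≠ u → w ≠ v → 0 ≤ a → 0 ≤ b →
      a + b = 1 → PlanarityObstruction G (a • π u + b • π v - π w)
  | edgeCrossing {u v w z : V} {a b c d : ℝ} : G.Adj u v → G.Adj w z → u ≠ w → u ≠ z → v ≠ w →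
      v ≠ z → 0 ≤ a → 0 ≤ b → a + b = 1 → 0 ≤ c → 0 ≤ d → c + d = 1 →
      PlanarityObstruction G (a • π u + b • π v - (c • π w + d • π z))
  | edgeOverlap {w u v : V} {b d : ℝ} : G.Adj w u → G.Adj w v → u ≠ v → b ∈ Ioc 0 1 →
      d ∈ Ioc 0 1 → PlanarityObstruction G (b • (π u - π w) - d • (π v - π w))

variable {G : SimpleGraph V}

namespace PlanarityObstruction

variable {Φ : (V → ℝ × ℝ) →ₗ[ℝ] ℝ × ℝ}

theorem snd_eq (hΦ : PlanarityObstruction G Φ) {p q : V → ℝ × ℝ} (h : IsHorizontalMorph p q) :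
    (Φ p).2 = (Φ q).2 := by
  cases hΦ <;> simp [h _]

theorem apply_ne_zero (hΦ : PlanarityObstruction G Φ) {r : V → ℝ × ℝ}
    (hr : IsPlanarDrawing G r) : Φ r ≠ 0 := by
  obtain ⟨hinj, hvert, hdisj, hadj⟩ := hr
  cases hΦ with
  | coincidence huv => simpa [sub_eq_zero] using hinj.ne huv
  | vertexOnEdge huv hwu hwv ha hb hab =>
    simpa [sub_eq_zero] using fun h => hvert _ _ _ huv hwu hwv ⟨_, _, ha, hb, hab, h⟩
  | edgeCrossing huv hwz h1 h2 h3 h4 ha hb hab hc hd hcd =>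
    simpa [sub_eq_zero] using fun h => disjoint_left.1 (hdisj _ _ _ _ huv hwz h1 h2 h3 h4)
      ⟨_, _, ha, hb, hab, rfl⟩ ⟨_, _, hc, hd, hcd, h.symm⟩
  | @edgeOverlap w u v b d hwu hwv huv hb hd =>
    intro h
    simp only [LinearMap.sub_apply, LinearMap.smul_apply, LinearMap.proj_apply, sub_eq_zero] at h
    have hmem : r w + b • (r u - r w) ∈ segment ℝ (r w) (r u) ∩ segment ℝ (r w) (r v) := by
      rw [segment_eq_image', segment_eq_image']
      exact ⟨⟨b, Ioc_subset_Icc_self hb, rfl⟩, ⟨d, Ioc_subset_Icc_self hd, by rw [h]⟩⟩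
    rw [hadj _ _ _ hwu hwv huv, mem_singleton_iff, add_eq_left, smul_eq_zero, sub_eq_zero] at hmem
    exact hmem.elim hb.1.ne' (hinj.ne hwu.ne')

end PlanarityObstruction

theorem isPlanarDrawing_iff_forall_obstruction {r : V → ℝ × ℝ} :
    IsPlanarDrawing G r ↔ ∀ Φ, PlanarityObstruction G Φ → Φ r ≠ 0 := by
  refine ⟨fun hr _ hΦ => hΦ.apply_ne_zero hr, fun h => ?_⟩
  refine ⟨fun u v huv => ?_, ?_, ?_, fun w u v hwu hwv huv => ?_⟩
  · by_contra hne
    exact h _ (.coincidence hne) (by simp [huv])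
  · rintro u v w huv hwu hwv ⟨a, b, ha, hb, hab, hw⟩
    exact h _ (.vertexOnEdge huv hwu hwv ha hb hab) (by simp [hw])
  · intro u v w z huv hwz h1 h2 h3 h4
    rw [disjoint_left]
    rintro x ⟨a, b, ha, hb, hab, rfl⟩ ⟨c, d, hc, hd, hcd, hx⟩
    exact h _ (.edgeCrossing huv hwz h1 h2 h3 h4 ha hb hab hc hd hcd) (by simp [hx])
  · refine subset_antisymm ?_ (singleton_subset_iff.2 ⟨left_mem_segment .., left_mem_segment ..⟩)
    rw [segment_eq_image', segment_eq_image']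
    rintro _ ⟨⟨b, hb, rfl⟩, ⟨d, hd, hx⟩⟩
    rcases hb.1.eq_or_lt with rfl | hb0
    · simp
    rcases hd.1.eq_or_lt with rfl | hd0
    · simpa using hx.symm
    exact (h _ (.edgeOverlap hwu hwv huv ⟨hb0, hb.2⟩ ⟨hd0, hd.2⟩)
      (by simpa [sub_eq_zero] using hx.symm)).elim

theorem isPlanarMorph_iff_forall_mem_segment {p q : V → ℝ × ℝ} :
    IsPlanarMorph G p q ↔ ∀ r ∈ segment ℝ p q, IsPlanarDrawing G r := by
  rw [segment_eq_image, forall_mem_image]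
  rfl

theorem isPlanarMorph_iff_forall_obstruction {p q : V → ℝ × ℝ} :
    IsPlanarMorph G p q ↔
      ∀ Φ, PlanarityObstruction G Φ → (0 : ℝ × ℝ) ∉ segment ℝ (Φ p) (Φ q) := by
  simp_rw [isPlanarMorph_iff_forall_mem_segment, isPlanarDrawing_iff_forall_obstruction,
    ← LinearMap.coe_toAffineMap, ← image_segment, mem_image, not_exists, not_and]
  exact ⟨fun h Φ hΦ r hr => h r hr Φ hΦ, fun h r hr Φ hΦ => h Φ hΦ r hr⟩

end Obstructions

theorem horizontal_planar_morph_trans_general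
    {V : Type*} (G : SimpleGraph V) (p₁ p₂ p₃ : V → ℝ × ℝ)
    (h12h : IsHorizontalMorph p₁ p₂) (h12p : IsPlanarMorph G p₁ p₂)
    (h23h : IsHorizontalMorph p₂ p₃) (h23p : IsPlanarMorph G p₂ p₃) :
    IsHorizontalMorph p₁ p₃ ∧ IsPlanarMorph G p₁ p₃ := by
  refine ⟨fun v => (h12h v).trans (h23h v), ?_⟩
  rw [isPlanarMorph_iff_forall_obstruction] at *
  intro Φ hΦ h0
  rcases Prod.segment_subset_union_of_snd_eq (hΦ.snd_eq h12h) (hΦ.snd_eq h23h) h0 with h | h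
  exacts [h12p Φ hΦ h, h23p Φ hΦ h]

/-- If the linear morphs `⟨p₁, p₂⟩` and `⟨p₂, p₃⟩` between planar straight-line drawings
of `G` are horizontal and planar, then the linear morph `⟨p₁, p₃⟩` is horizontal and
planar. -/
theorem horizontal_planar_morph_trans
    {V : Type*} [Fintype V] (G : SimpleGraph V) (p₁ p₂ p₃ : V → ℝ × ℝ)
    (h1 : IsPlanarDrawing G p₁) (h2 : IsPlanarDrawing G p₂) (h3 : IsPlanarDrawing G p₃)
    (h12h : IsHorizontalMorph p₁ p₂) (h12p : IsPlanarMorph G p₁ p₂)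
    (h23h : IsHorizontalMorph p₂ p₃) (h23p : IsPlanarMorph G p₂ p₃) :
    IsHorizontalMorph p₁ p₃ ∧ IsPlanarMorph G p₁ p₃ :=
  horizontal_planar_morph_trans_general G p₁ p₂ p₃ h12h h12p h23h h23p
end

section
/- Let G be a finite simple graph and let p and q be planar straight-line drawings of G such that the linear morph ⟨p, q⟩ is horizontal and planar. Let e = {u, v} and f = {w, z} be two edges of G with no common endpoint, and let c ∈ ℝ satisfy (p u).2 < c < (p v).2 and (p w).2 < c < (p z).2 (so throughout the morph each of the two segments crosses the horizontal line y = c in exactly one point). If the crossing point of the segment of e with the line y = c has strictly smaller first coordinate than the crossing point of the segment of f with that line in the drawing p, then the same holds in the drawing q. In other words, a horizontal planar linear morph preserves the left-to-right order in which any fixed horizontal line crosses two disjoint edges. -/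
/-!
Throughout a horizontal morph the heights of `u, v, w, z` are fixed, so the crossing point of
the segment `uv` with the line `y = c` sits at a fixed barycentric position on that segment and
therefore moves linearly in time, and likewise for `wz`. The signed horizontal distance between
the two crossing points is then an affine function of time; if it changed sign between `p` and
`q`, it would vanish at some intermediate time, where the two segments would meet, contradicting
planarity of the intermediate drawing.
-/

open Set

-- The point of the line `AB` at height `c`; when `A.2 = B.2` the division gives `0` and the value is `A`.
noncomputable def crossingAt (A B : ℝ × ℝ) (c : ℝ) : ℝ × ℝ :=
  (1 - (c - A.2) / (B.2 - A.2)) • A + ((c - A.2) / (B.2 - A.2)) • B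

lemma crossingAt_snd {A B : ℝ × ℝ} (hAB : A.2 ≠ B.2) (c : ℝ) : (crossingAt A B c).2 = c := by
  have : B.2 - A.2 ≠ 0 := sub_ne_zero.mpr hAB.symm
  simp only [crossingAt, Prod.snd_add, Prod.smul_snd, smul_eq_mul]
  field_simp
  ring

lemma crossingAt_mem_segment {A B : ℝ × ℝ} {c : ℝ} (hA : A.2 < c) (hB : c < B.2) :
    crossingAt A B c ∈ segment ℝ A B :=
  ⟨_, _, by rw [sub_nonneg, div_le_one (by linarith)]; linarith,
    div_nonneg (by linarith) (by linarith), sub_add_cancel 1 _, rfl⟩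

lemma eq_crossingAt_of_mem_segment {A B s : ℝ × ℝ} (hAB : A.2 ≠ B.2)
    (hs : s ∈ segment ℝ A B) : s = crossingAt A B s.2 := by
  obtain ⟨a, b, -, -, hab, rfl⟩ := hs
  obtain rfl : a = 1 - b := eq_sub_of_add_eq hab
  have hb : b = (((1 - b) • A + b • B).2 - A.2) / (B.2 - A.2) := by
    rw [eq_div_iff (sub_ne_zero.mpr hAB.symm)]
    simp only [Prod.snd_add, Prod.smul_snd, smul_eq_mul]
    ring
  rw [crossingAt, ← hb]

lemma IsPlanarDrawing.crossingAt_ne {V : Type*} {G : SimpleGraph V} {r : V → ℝ × ℝ}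
    (hr : IsPlanarDrawing G r) {u v w z : V} (he : G.Adj u v) (hf : G.Adj w z)
    (huw : u ≠ w) (huz : u ≠ z) (hvw : v ≠ w) (hvz : v ≠ z) {c : ℝ}
    (hu : (r u).2 < c) (hv : c < (r v).2) (hw : (r w).2 < c) (hz : c < (r z).2) :
    crossingAt (r u) (r v) c ≠ crossingAt (r w) (r z) c := fun h =>
  disjoint_left.mp (hr.2.2.1 u v w z he hf huw huz hvw hvz)
    (crossingAt_mem_segment hu hv) (h ▸ crossingAt_mem_segment hw hz)

section HorizontalMorph

variable {V : Type*} {p q : V → ℝ × ℝ}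

lemma IsHorizontalMorph.morphAt_snd (hhor : IsHorizontalMorph p q) (t : ℝ) (x : V) :
    (morphAt p q t x).2 = (p x).2 := by
  simp only [morphAt, Prod.snd_add, Prod.smul_snd, smul_eq_mul, ← hhor x]
  ring

lemma IsHorizontalMorph.crossingAt_morphAt (hhor : IsHorizontalMorph p q) (t : ℝ) (x y : V)
    (c : ℝ) :
    crossingAt (morphAt p q t x) (morphAt p q t y) c =
      (1 - t) • crossingAt (p x) (p y) c + t • crossingAt (q x) (q y) c := by
  rw [crossingAt, crossingAt, crossingAt, hhor.morphAt_snd, hhor.morphAt_snd, ← hhor x, ← hhor y]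
  simp only [morphAt]
  module

end HorizontalMorph

lemma exists_mem_Icc_lerp_eq_zero {a b : ℝ} (ha : a < 0) (hb : 0 ≤ b) :
    ∃ θ ∈ Icc (0 : ℝ) 1, (1 - θ) * a + θ * b = 0 := by
  have : (0 : ℝ) ∈ segment ℝ a b := by
    rw [segment_eq_uIcc]
    exact mem_uIcc.mpr (Or.inl ⟨ha.le, hb⟩)
  obtain ⟨α, θ, hα, hθ, hαθ, h⟩ := this
  refine ⟨θ, ⟨hθ, by linarith⟩, ?_⟩
  rw [← h, ← hαθ, add_sub_cancel_right, smul_eq_mul, smul_eq_mul]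

theorem horizontal_planar_morph_preserves_crossing_order_general
    {V : Type*} (G : SimpleGraph V) (p q : V → ℝ × ℝ)
    (hhor : IsHorizontalMorph p q) (hplan : IsPlanarMorph G p q)
    (u v w z : V) (he : G.Adj u v) (hf : G.Adj w z)
    (huw : u ≠ w) (huz : u ≠ z) (hvw : v ≠ w) (hvz : v ≠ z)
    (c : ℝ)
    (hu : (p u).2 < c) (hv : c < (p v).2)
    (hw : (p w).2 < c) (hz : c < (p z).2)
    (hpc : ∀ s ∈ segment ℝ (p u) (p v), s.2 = c →
      ∀ t ∈ segment ℝ (p w) (p z), t.2 = c → s.1 < t.1) :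
    ∀ s ∈ segment ℝ (q u) (q v), s.2 = c →
      ∀ t ∈ segment ℝ (q w) (q z), t.2 = c → s.1 < t.1 := by
  intro s hs hsc t ht htc
  rw [eq_crossingAt_of_mem_segment (by rw [← hhor, ← hhor]; linarith) hs,
    eq_crossingAt_of_mem_segment (by rw [← hhor, ← hhor]; linarith) ht, hsc, htc]
  by_contra! hq
  have hp : (crossingAt (p u) (p v) c).1 < (crossingAt (p w) (p z) c).1 :=
    hpc _ (crossingAt_mem_segment hu hv) (crossingAt_snd (by linarith) c)
      _ (crossingAt_mem_segment hw hz) (crossingAt_snd (by linarith) c)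
  obtain ⟨θ, hθ, hmeet⟩ := exists_mem_Icc_lerp_eq_zero (sub_neg.mpr hp) (sub_nonneg.mpr hq)
  simp only [← hhor.morphAt_snd θ] at hu hv hw hz
  refine (hplan θ hθ).crossingAt_ne he hf huw huz hvw hvz hu hv hw hz (Prod.ext ?_ ?_)
  · simp only [hhor.crossingAt_morphAt, Prod.fst_add, Prod.smul_fst, smul_eq_mul]
    linarith
  · rw [crossingAt_snd (by linarith), crossingAt_snd (by linarith)]

/-- A horizontal planar linear morph preserves the left-to-right order in which a fixed
horizontal line `y = c` crosses two edges `e = {u,v}` and `f = {w,z}` sharing no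
endpoint, provided the line strictly separates the endpoints of each edge (so that each
segment crosses the line in exactly one point throughout the morph). -/
theorem horizontal_planar_morph_preserves_crossing_order
    {V : Type*} [Fintype V] (G : SimpleGraph V) (p q : V → ℝ × ℝ)
    (hp : IsPlanarDrawing G p) (hq : IsPlanarDrawing G q)
    (hhor : IsHorizontalMorph p q) (hplan : IsPlanarMorph G p q)
    (u v w z : V) (he : G.Adj u v) (hf : G.Adj w z)
    (huw : u ≠ w) (huz : u ≠ z) (hvw : v ≠ w) (hvz : v ≠ z)
    (c : ℝ)
    (hu : (p u).2 < c) (hv : c < (p v).2)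
    (hw : (p w).2 < c) (hz : c < (p z).2)
    (hpc : ∀ s ∈ segment ℝ (p u) (p v), s.2 = c →
      ∀ t ∈ segment ℝ (p w) (p z), t.2 = c → s.1 < t.1) :
    ∀ s ∈ segment ℝ (q u) (q v), s.2 = c →
      ∀ t ∈ segment ℝ (q w) (q z), t.2 = c → s.1 < t.1 :=
  horizontal_planar_morph_preserves_crossing_order_general G p q hhor hplan u v w z he hf huw huz
    hvw hvz c hu hv hw hz hpc
end

section
/- Let a, b, c, a′, b′, c′ ∈ ℝ² satisfy a.2 = a′.2, b.2 = b′.2 and c.2 = c′.2 (so each of the three points moves only horizontally). For t ∈ [0,1] put a_t = (1−t)·a + t·a′, b_t = (1−t)·b + t·b′, c_t = (1−t)·c + t·c′, and let f(t) = cross(a_t − b_t, c_t − b_t). Then f is an affine function of t. Consequently, for all 0 ≤ t₀ ≤ t ≤ t₁ ≤ 1: if f(t₀) ≥ 0 and f(t₁) ≥ 0 then f(t) ≥ 0, and if f(t₀) ≤ 0 and f(t₁) ≤ 0 then f(t) ≤ 0. In particular, during a horizontal linear morph the convexity status (convex or reflex) of the angle formed at b by the points a, b, c changes at most once, and if the angle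 is convex at the beginning and at the end of the morph then it is convex throughout. -/
/-!
Subtracting the interpolated point `b_t` from `a_t` and `c_t` gives the interpolations of the
difference vectors, which again keep their `y`-coordinates. For two vectors `u_t`, `v_t` with
constant `y`-coordinates, `cross2 u_t v_t = u_t.1 * v.2 - u.2 * v_t.1` is linear in the
`x`-coordinates, hence `f t = (1 - t) * f 0 + t * f 1`. An affine function that is nonnegative
at two points is nonnegative between them.
-/

/-- The planar cross product of two vectors in `ℝ²`. -/
def cross2 (u v : ℝ × ℝ) : ℝ := u.1 * v.2 - u.2 * v.1

theorem combo_sub_combo {R M : Type*} [CommRing R] [AddCommGroup M] [Module R M]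
    (a a' b b' : M) (t : R) :
    ((1 - t) • a + t • a') - ((1 - t) • b + t • b') = (1 - t) • (a - b) + t • (a' - b') := by
  module

theorem cross2_combo_of_snd_eq {u u' v v' : ℝ × ℝ} (hu : u.2 = u'.2) (hv : v.2 = v'.2)
    (t : ℝ) :
    cross2 ((1 - t) • u + t • u') ((1 - t) • v + t • v') =
      (1 - t) * cross2 u v + t * cross2 u' v' := by
  simp only [cross2, Prod.fst_add, Prod.snd_add, Prod.smul_fst, Prod.smul_snd, smul_eq_mul,
    ← hu, ← hv]
  ring

theorem affine_nonneg_of_nonneg_of_nonneg {α β t₀ t t₁ : ℝ} (h₀ : t₀ ≤ t) (h₁ : t ≤ t₁)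
    (hf₀ : 0 ≤ α * t₀ + β) (hf₁ : 0 ≤ α * t₁ + β) : 0 ≤ α * t + β := by
  have hcombo : (t₁ - t₀) * (α * t + β) = (t₁ - t) * (α * t₀ + β) + (t - t₀) * (α * t₁ + β) := by
    ring
  rcases h₀.lt_or_eq with hlt | rfl
  · have hpos : 0 < t₁ - t₀ := by linarith
    have : 0 ≤ (t₁ - t₀) * (α * t + β) := by
      rw [hcombo]
      exact add_nonneg (mul_nonneg (by linarith) hf₀) (mul_nonneg (by linarith) hf₁)
    exact nonneg_of_mul_nonneg_right (by linarith) hpos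
  · exact hf₀

theorem affine_nonpos_of_nonpos_of_nonpos {α β t₀ t t₁ : ℝ} (h₀ : t₀ ≤ t) (h₁ : t ≤ t₁)
    (hf₀ : α * t₀ + β ≤ 0) (hf₁ : α * t₁ + β ≤ 0) : α * t + β ≤ 0 := by
  have := affine_nonneg_of_nonneg_of_nonneg (α := -α) (β := -β) h₀ h₁ (by linarith)
    (by linarith)
  linarith

/-- During a horizontal linear morph of three points `a`, `b`, `c` (each point keeps its
`y`-coordinate), the cross product `f t = cross((a_t - b_t), (c_t - b_t))` measuring the
convexity of the angle at `b` is an affine function of `t`. Consequently its sign changes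
at most once: for `0 ≤ t₀ ≤ t ≤ t₁ ≤ 1`, if `f t₀` and `f t₁` are both nonnegative
(resp. nonpositive), then so is `f t`. In particular, if the angle at `b` is convex at
the beginning and at the end of the morph then it is convex throughout. -/
theorem cross_affine_of_horizontal_morph
    (a b c a' b' c' : ℝ × ℝ)
    (ha : a.2 = a'.2) (hb : b.2 = b'.2) (hc : c.2 = c'.2)
    (f : ℝ → ℝ)
    (hf : ∀ t : ℝ, f t =
      cross2 (((1 - t) • a + t • a') - ((1 - t) • b + t • b'))
             (((1 - t) • c + t • c') - ((1 - t) • b + t • b'))) :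
    (∃ α β : ℝ, ∀ t : ℝ, f t = α * t + β) ∧
    (∀ t₀ t t₁ : ℝ, 0 ≤ t₀ → t₀ ≤ t → t ≤ t₁ → t₁ ≤ 1 →
      ((0 ≤ f t₀ → 0 ≤ f t₁ → 0 ≤ f t) ∧ (f t₀ ≤ 0 → f t₁ ≤ 0 → f t ≤ 0))) := by
  set β := cross2 (a - b) (c - b)
  set α := cross2 (a' - b') (c' - b') - β
  have haffine : ∀ t, f t = α * t + β := fun t => by
    rw [hf, combo_sub_combo, combo_sub_combo,
      cross2_combo_of_snd_eq (by simp [ha, hb]) (by simp [hc, hb])]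
    ring
  refine ⟨⟨α, β, haffine⟩, fun t₀ t t₁ _ h₀ h₁ _ => ?_⟩
  simp only [haffine]
  exact ⟨affine_nonneg_of_nonneg_of_nonneg h₀ h₁, affine_nonpos_of_nonpos_of_nonpos h₀ h₁⟩
end

section
/- Let c, b₁, b₂, a₁, a₂ ∈ ℝ² and let j be a real number with j ≥ 2. Suppose b₁.2 = b₂.2 = c.2 + 1, a₁.2 = a₂.2 = c.2 + j, b₁.1 < b₂.1 (b₁ is left of b₂), a₁.1 < a₂.1 (a₁ is left of a₂), cross(b₁ − c, a₁ − c) ≥ 0 (a₁ is not to the right of the oriented line from c through b₁), and cross(b₂ − c, a₂ − c) ≤ 0 (a₂ is not to the left of the oriented line from c through b₂). Let D = b₂.1 − b₁.1 be the distance between b₁ and b₂. Then the Euclidean distance between a₁ and a₂ is at least j·D. -/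
lemma cross2_sub_eq_of_snd_eq {c b a : ℝ × ℝ} {j : ℝ} (hb : b.2 = c.2 + 1)
    (ha : a.2 = c.2 + j) :
    cross2 (b - c) (a - c) = c.1 + j * (b.1 - c.1) - a.1 := by
  simp only [cross2, Prod.fst_sub, Prod.snd_sub, hb, ha]
  ring

theorem level_distance_blowup_general
    (c b₁ b₂ a₁ a₂ : ℝ × ℝ) (j : ℝ)
    (hb₁ : b₁.2 = c.2 + 1) (hb₂ : b₂.2 = c.2 + 1)
    (ha₁ : a₁.2 = c.2 + j) (ha₂ : a₂.2 = c.2 + j)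
    (h₁ : 0 ≤ cross2 (b₁ - c) (a₁ - c))
    (h₂ : cross2 (b₂ - c) (a₂ - c) ≤ 0) :
    j * (b₂.1 - b₁.1) ≤ Real.sqrt ((a₂.1 - a₁.1) ^ 2 + (a₂.2 - a₁.2) ^ 2) := by
  rw [cross2_sub_eq_of_snd_eq hb₁ ha₁] at h₁
  rw [cross2_sub_eq_of_snd_eq hb₂ ha₂] at h₂
  calc j * (b₂.1 - b₁.1) ≤ a₂.1 - a₁.1 := by linarith
    _ ≤ |a₂.1 - a₁.1| := le_abs_self _
    _ ≤ Real.sqrt ((a₂.1 - a₁.1) ^ 2 + (a₂.2 - a₁.2) ^ 2) :=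
      Real.abs_le_sqrt (le_add_of_nonneg_right (sq_nonneg _))

/-- Let `c` lie on level `k`, let `b₁` (left) and `b₂` (right) lie on level `k + 1`, and
let `a₁` (left) and `a₂` (right) lie on level `k + j` with `j ≥ 2`. If `a₁` is not to
the right of the oriented line from `c` through `b₁` and `a₂` is not to the left of the
oriented line from `c` through `b₂`, then the Euclidean distance between `a₁` and `a₂`
is at least `j` times the distance `D = b₂.1 - b₁.1` between `b₁` and `b₂`. -/
theorem level_distance_blowup
    (c b₁ b₂ a₁ a₂ : ℝ × ℝ) (j : ℝ) (hj : 2 ≤ j)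
    (hb₁ : b₁.2 = c.2 + 1) (hb₂ : b₂.2 = c.2 + 1)
    (ha₁ : a₁.2 = c.2 + j) (ha₂ : a₂.2 = c.2 + j)
    (hb : b₁.1 < b₂.1) (ha : a₁.1 < a₂.1)
    (h₁ : 0 ≤ cross2 (b₁ - c) (a₁ - c))
    (h₂ : cross2 (b₂ - c) (a₂ - c) ≤ 0) :
    j * (b₂.1 - b₁.1) ≤ Real.sqrt ((a₂.1 - a₁.1) ^ 2 + (a₂.2 - a₁.2) ^ 2) :=
  level_distance_blowup_general c b₁ b₂ a₁ a₂ j hb₁ hb₂ ha₁ ha₂ h₁ h₂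
end

section
/- Let G be a finite 2-connected simple graph on vertex set V, let C be a cycle in G, and let W be the vertex set of C. Suppose G has property (I3) with respect to W: for every vertex w ∉ W there exist three paths in G from w to vertices of W that pairwise intersect only in the vertex w and each of which meets W only in its final endpoint. Then every separation pair {p, q} of G is W-external: p ∈ W, q ∈ W, and every connected component of the subgraph induced on V ∖ {p, q} contains a vertex of W. -/
/-- Property (I3) of a graph `G` with respect to a vertex set `W`: from every vertex
`w ∉ W` there exist three paths in `G` from `w` to vertices of `W` that pairwise
intersect only in the vertex `w`, each of which meets `W` only in its final endpoint. -/
def PropI3 {V : Type*} (G : SimpleGraph V) (W : Set V) : Prop :=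
  ∀ w : V, w ∉ W →
    ∃ (a b c : V) (P₁ : G.Walk w a) (P₂ : G.Walk w b) (P₃ : G.Walk w c),
      a ∈ W ∧ b ∈ W ∧ c ∈ W ∧
      P₁.IsPath ∧ P₂.IsPath ∧ P₃.IsPath ∧
      (∀ x ∈ P₁.support, x ∈ W → x = a) ∧
      (∀ x ∈ P₂.support, x ∈ W → x = b) ∧
      (∀ x ∈ P₃.support, x ∈ W → x = c) ∧
      (∀ x ∈ P₁.support, x ∈ P₂.support → x = w) ∧
      (∀ x ∈ P₁.support, x ∈ P₃.support → x = w) ∧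
      (∀ x ∈ P₂.support, x ∈ P₃.support → x = w)

/-- A finite simple graph is 2-connected if it has at least 3 vertices and deleting any
single vertex leaves a connected induced subgraph. -/
def TwoConnected {V : Type*} [Fintype V] (G : SimpleGraph V) : Prop :=
  3 ≤ Fintype.card V ∧
  ∀ v : V, (G.induce {z | z ≠ v}).Connected

/-- A pair of distinct vertices is a separation pair if deleting both vertices leaves a
disconnected induced subgraph. -/
def IsSeparationPair {V : Type*} (G : SimpleGraph V) (p q : V) : Prop :=
  p ≠ q ∧ ¬ (G.induce {z | z ≠ p ∧ z ≠ q}).Connected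

/-!
By (I3), of the three paths from a vertex off the cycle to the cycle, at most one passes
through `p` and at most one through `q`, so one avoids both: every component of `G - {p, q}`
meets the cycle. If `p` were off the cycle, the cycle minus `q` would be a connected subgraph
of `G - {p, q}` meeting every component, so `{p, q}` would not separate `G`.
-/

namespace SimpleGraph

variable {V : Type*} {G : SimpleGraph V}

lemma Walk.IsPath.connected_induce_support_diff_end {u v : V} {P : G.Walk u v}
    (hP : P.IsPath) (huv : u ≠ v) : (G.induce {z | z ∈ P.support ∧ z ≠ v}).Connected := by
  classical
  have hu : u ∈ {z | z ∈ P.support ∧ z ≠ v} := ⟨P.start_mem_support, huv⟩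
  refine (connected_iff_exists_forall_reachable _).2 ⟨⟨u, hu⟩, ?_⟩
  rintro ⟨x, hx, hxv⟩
  refine ⟨(P.takeUntil x hx).induce {z | z ∈ P.support ∧ z ≠ v} fun z hz => ?_⟩
  refine ⟨P.support_takeUntil_subset_support hx hz, ?_⟩
  rintro rfl
  exact Walk.endpoint_notMem_support_takeUntil hP hx hxv.symm hz

lemma Walk.IsCycle.connected_induce_support_diff {v : V} {C : G.Walk v v} (hC : C.IsCycle)
    (r : V) : (G.induce {z | z ∈ C.support ∧ z ≠ r}).Connected := by
  classical
  by_cases hr : r ∈ C.support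
  · have hC' := hC.rotate hr
    have hs : {z | z ∈ C.support ∧ z ≠ r} =
        {z | z ∈ (C.rotate r hr).tail.support ∧ z ≠ r} := by
      ext z
      rw [Set.mem_ofPred_eq, Set.mem_ofPred_eq, ← Walk.mem_support_rotate_iff C r hr,
        ← Walk.cons_support_tail hC'.not_nil, List.mem_cons]
      grind
    rw [hs]
    exact hC'.isPath_tail.connected_induce_support_diff_end
      (G.ne_of_adj (Walk.adj_snd hC'.not_nil)).symm
  · have hs : {z | z ∈ C.support ∧ z ≠ r} = {z | z ∈ C.support} := by
      ext z
      exact and_iff_left_of_imp fun hz hzr => hr (hzr ▸ hz)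
    rw [hs]
    exact C.connected_induce_support

lemma connected_induce_of_forall_exists_reachable {s t : Set V} (hts : t ⊆ s)
    (ht : (G.induce t).Connected)
    (hreach : ∀ x : s, ∃ y : s, (y : V) ∈ t ∧ (G.induce s).Reachable x y) :
    (G.induce s).Connected := by
  obtain ⟨⟨u, hu⟩⟩ := ht.nonempty
  refine (connected_iff_exists_forall_reachable _).2 ⟨⟨u, hts hu⟩, fun x => ?_⟩
  obtain ⟨y, hyt, hxy⟩ := hreach x
  have hty : (G.induce t).Reachable ⟨u, hu⟩ ⟨y, hyt⟩ := ht.preconnected _ _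
  exact (hty.map (induceHomOfLE G hts).toHom).trans hxy.symm

end SimpleGraph

open SimpleGraph

section PropI3

variable {V : Type*} {G : SimpleGraph V} {W : Set V}

lemma PropI3.exists_walk_avoiding (hI3 : PropI3 G W) {x : V} (hx : x ∉ W) {p q : V}
    (hxp : x ≠ p) (hxq : x ≠ q) : ∃ y ∈ W, ∃ P : G.Walk x y, p ∉ P.support ∧ q ∉ P.support := by
  obtain ⟨a, b, c, P₁, P₂, P₃, ha, hb, hc, -, -, -, -, -, -, h₁₂, h₁₃, h₂₃⟩ := hI3 x hx
  by_contra! h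
  by_cases hp₁ : p ∈ P₁.support
  · have hq₂ := h b hb P₂ fun hp₂ => hxp (h₁₂ p hp₁ hp₂).symm
    have hq₃ := h c hc P₃ fun hp₃ => hxp (h₁₃ p hp₁ hp₃).symm
    exact hxq (h₂₃ q hq₂ hq₃).symm
  · have hq₁ := h a ha P₁ hp₁
    have hp₂ : p ∈ P₂.support := by_contra fun hp₂ => hxq (h₁₂ q hq₁ (h b hb P₂ hp₂)).symm
    have hp₃ : p ∈ P₃.support := by_contra fun hp₃ => hxq (h₁₃ q hq₁ (h c hc P₃ hp₃)).symm
    exact hxp (h₂₃ p hp₂ hp₃).symm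

lemma PropI3.exists_reachable_induce_mem (hI3 : PropI3 G W) (p q : V)
    (x : {z : V // z ≠ p ∧ z ≠ q}) : ∃ y : {z : V // z ≠ p ∧ z ≠ q}, (y : V) ∈ W ∧
      (G.induce {z | z ≠ p ∧ z ≠ q}).Reachable x y := by
  obtain ⟨x, hxp, hxq⟩ := x
  by_cases hx : x ∈ W
  · exact ⟨⟨x, hxp, hxq⟩, hx, Reachable.refl _⟩
  obtain ⟨y, hy, P, hPp, hPq⟩ := hI3.exists_walk_avoiding hx hxp hxq
  have hP : ∀ z ∈ P.support, z ∈ {z | z ≠ p ∧ z ≠ q} := fun z hz =>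
    ⟨fun e => hPp (e ▸ hz), fun e => hPq (e ▸ hz)⟩
  exact ⟨⟨y, hP y P.end_mem_support⟩, hy, ⟨P.induce _ hP⟩⟩

lemma PropI3.connected_induce_of_notMem_cycle {v : V} {C : G.Walk v v} (hC : C.IsCycle)
    (hI3 : PropI3 G {x | x ∈ C.support}) {p : V} (hp : p ∉ C.support) (q : V) :
    (G.induce {z | z ≠ p ∧ z ≠ q}).Connected := by
  refine connected_induce_of_forall_exists_reachable (t := {z | z ∈ C.support ∧ z ≠ q})
    (fun z hz => ⟨fun e => hp (e ▸ hz.1), hz.2⟩) (hC.connected_induce_support_diff q) fun x => ?_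
  obtain ⟨y, hy, hxy⟩ := hI3.exists_reachable_induce_mem p q x
  exact ⟨y, ⟨hy, y.2.2⟩, hxy⟩

end PropI3

theorem separation_pair_external_of_propI3_general
    {V : Type*} (G : SimpleGraph V)
    (v₀ : V) (C : G.Walk v₀ v₀) (hC : C.IsCycle)
    (W : Set V) (hW : W = {x | x ∈ C.support})
    (hI3 : PropI3 G W)
    (p q : V) (hsep : IsSeparationPair G p q) :
    p ∈ W ∧ q ∈ W ∧
    ∀ x : {z : V // z ≠ p ∧ z ≠ q},
      ∃ y : {z : V // z ≠ p ∧ z ≠ q}, (y : V) ∈ W ∧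
        (G.induce {z | z ≠ p ∧ z ≠ q}).Reachable x y := by
  subst hW
  obtain ⟨-, hdisconnected⟩ := hsep
  refine ⟨?_, ?_, hI3.exists_reachable_induce_mem p q⟩
  · by_contra hp
    exact hdisconnected (hI3.connected_induce_of_notMem_cycle hC hp q)
  · by_contra hq
    have hcomm : {z | z ≠ p ∧ z ≠ q} = {z | z ≠ q ∧ z ≠ p} := Set.ext fun _ => and_comm
    exact hdisconnected (hcomm ▸ hI3.connected_induce_of_notMem_cycle hC hq p)

/-- If `G` is 2-connected and has property (I3) with respect to the vertex set `W` of a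
cycle `C` of `G`, then every separation pair `{p, q}` of `G` is `W`-external: both `p`
and `q` lie in `W` and every connected component of the subgraph induced on
`V ∖ {p, q}` contains a vertex of `W`. -/
theorem separation_pair_external_of_propI3
    {V : Type*} [Fintype V] (G : SimpleGraph V) (h2 : TwoConnected G)
    (v₀ : V) (C : G.Walk v₀ v₀) (hC : C.IsCycle)
    (W : Set V) (hW : W = {x | x ∈ C.support})
    (hI3 : PropI3 G W)
    (p q : V) (hsep : IsSeparationPair G p q) :
    p ∈ W ∧ q ∈ W ∧
    ∀ x : {z : V // z ≠ p ∧ z ≠ q},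
      ∃ y : {z : V // z ≠ p ∧ z ≠ q}, (y : V) ∈ W ∧
        (G.induce {z | z ≠ p ∧ z ≠ q}).Reachable x y :=
  separation_pair_external_of_propI3_general G v₀ C hC W hW hI3 p q hsep
end

section
/- Let G be a finite 2-connected simple graph on vertex set V, let C be a cycle in G with vertex set W, and let {u, v} be a separation pair of G. Then the following are equivalent. (a) u ∈ W, v ∈ W, and every connected component of the subgraph induced on V ∖ {u, v} contains a vertex of W. (b) All of the following hold: u, v ∈ W; the cycle C decomposes into two internally disjoint paths (u, w₁, …, w_j, v) and (v, w′₁, …, w′_ℓ, u) with j ≥ 1 and ℓ ≥ 1 (so each of the two arcs of C between u and v has at least one interior vertex); the vertices w₁, …, w_j all lie in one connected component C₁ of the subgraph induced on V ∖ {u, v}; the vertices w′₁, …, w′_ℓ all lie in a connected component C₂ of that subgraph; C₁ ≠ C₂; and the subgraph induced on V ∖ {u, v} has no connected component other than C₁ and C₂. -/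
/-- Every connected component of the graph induced on `V ∖ {u, v}` contains a vertex of
`W`. -/
def AllComponentsMeet {V : Type*} (G : SimpleGraph V) (W : Set V) (u v : V) : Prop :=
  ∀ x : {z : V // z ≠ u ∧ z ≠ v},
    ∃ y : {z : V // z ≠ u ∧ z ≠ v}, (y : V) ∈ W ∧
      (G.induce {z | z ≠ u ∧ z ≠ v}).Reachable x y

namespace SimpleGraph.Walk

variable {V : Type*} {G : SimpleGraph V} {a b : V}

lemma two_le_length_of_mem_support {p : G.Walk a b} {z : V} (hz : z ∈ p.support)
    (hza : z ≠ a) (hzb : z ≠ b) : 2 ≤ p.length := by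
  cases p with
  | nil => simp_all
  | cons h q =>
    cases q with
    | nil => simp_all
    | cons => simp

lemma IsPath.snd_ne_end {p : G.Walk a b} (hp : p.IsPath) (h : 2 ≤ p.length) : p.snd ≠ b := by
  intro hb
  have := hp.getVert_injOn (show 1 ∈ {i | i ≤ p.length} from h.trans' one_le_two)
    (show p.length ∈ {i | i ≤ p.length} from le_refl p.length) (by rw [getVert_length]; exact hb)
  omega

lemma IsPath.exists_mem_support_ne_ne {p : G.Walk a b} (hp : p.IsPath) (h : 2 ≤ p.length) :
    ∃ z ∈ p.support, z ≠ a ∧ z ≠ b :=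
  have hnil : ¬ p.Nil := by rw [not_nil_iff_lt_length]; omega
  ⟨p.snd, List.mem_of_mem_tail (p.snd_mem_tail_support hnil), (p.adj_snd hnil).ne',
    hp.snd_ne_end h⟩

lemma IsPath.preconnected_induce_interior {p : G.Walk a b} (hp : p.IsPath) :
    (G.induce {z | z ∈ p.support ∧ z ≠ a ∧ z ≠ b}).Preconnected := by
  by_cases h : 2 ≤ p.length
  · have hnil : ¬ p.Nil := by rw [not_nil_iff_lt_length]; omega
    have htail : ¬ p.tail.Nil := by rw [not_nil_iff_lt_length, length_tail]; omega
    have hsupp : p.support = a :: (p.tail.dropLast.support ++ [b]) := by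
      rw [support_dropLast_concat htail, cons_support_tail hnil]
    have hnd := hp.support_nodup
    rw [hsupp] at hnd
    suffices hinterior : {z | z ∈ p.support ∧ z ≠ a ∧ z ≠ b} = {z | z ∈ p.tail.dropLast.support} by
      rw [hinterior]
      exact p.tail.dropLast.connected_induce_support.preconnected
    ext z
    rw [Set.mem_ofPred_eq, Set.mem_ofPred_eq, hsupp]
    simp only [List.nodup_cons, List.nodup_append, List.mem_append, List.mem_singleton] at hnd
    simp only [List.mem_cons, List.mem_append]
    grind
  · rintro ⟨x, hx, hxa, hxb⟩
    exact absurd (two_le_length_of_mem_support hx hxa hxb) h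

lemma IsPath.reachable_induce {S : Set V} {p : G.Walk a b} (hp : p.IsPath)
    (hS : ∀ z, z ∈ S ↔ z ≠ a ∧ z ≠ b) {x y : S} (hx : ↑x ∈ p.support) (hy : ↑y ∈ p.support) :
    (G.induce S).Reachable x y :=
  (hp.preconnected_induce_interior ⟨x, hx, (hS x).1 x.2⟩ ⟨y, hy, (hS y).1 y.2⟩).map
    (induceHomOfLE G fun z hz => (hS z).2 hz.2).toHom

lemma mem_support_of_edges_subset {c d z : V} {p : G.Walk a b} {q : G.Walk c d}
    (h : p.edges ⊆ q.edges) (hz : z ∈ p.support) (hza : z ≠ a) : z ∈ q.support := by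
  have hp : ¬ p.Nil := fun hnil => hza (by simpa [nil_iff_support_eq.1 hnil] using hz)
  obtain ⟨e, he, hze⟩ := (mem_support_iff_exists_mem_edges_of_not_nil hp).1 hz
  exact mem_support_of_mem_edges (h he) hze

lemma IsCycle.support_inter_support_of_append {P : G.Walk a b} {Q : G.Walk b a}
    (h : (P.append Q).IsCycle) : {z | z ∈ P.support} ∩ {z | z ∈ Q.support} = {a, b} := by
  have hnd := h.support_nodup
  rw [tail_support_append, List.nodup_append] at hnd
  ext z
  simp only [Set.mem_inter_iff, Set.mem_ofPred_eq, Set.mem_insert_iff, Set.mem_singleton_iff]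
  constructor
  · rintro ⟨hzP, hzQ⟩
    rw [mem_support_iff] at hzP hzQ
    grind
  · rintro (rfl | rfl) <;> simp

lemma IsCycle.exists_mem_support_ne_ne {w : V} {c : G.Walk w w} (hc : c.IsCycle) (a b : V) :
    ∃ z ∈ c.support, z ≠ a ∧ z ≠ b := by
  classical
  have hcard : ({a, b} : Finset V).card < c.support.tail.toFinset.card := by
    rw [List.toFinset_card_of_nodup hc.support_nodup, List.length_tail, length_support]
    exact (Finset.card_le_two).trans_lt (by have := hc.three_le_length; omega)
  obtain ⟨z, hz, hzab⟩ := Finset.exists_mem_notMem_of_card_lt_card hcard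
  simp only [Finset.mem_insert, Finset.mem_singleton, not_or] at hzab
  exact ⟨z, List.mem_of_mem_tail (List.mem_toFinset.1 hz), hzab⟩

lemma IsCycle.exists_isCycle_append {w : V} {c : G.Walk w w} (hc : c.IsCycle)
    (ha : a ∈ c.support) (hb : b ∈ c.support) :
    ∃ (P : G.Walk a b) (Q : G.Walk b a), (P.append Q).IsCycle ∧
      (P.edges ++ Q.edges).Perm c.edges ∧ c.support ⊆ P.support ++ Q.support := by
  classical
  have hb' : b ∈ (c.rotate a ha).support := (mem_support_rotate_iff ..).2 hb
  have hspec := (c.rotate a ha).take_spec hb'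
  refine ⟨_, _, hspec ▸ hc.rotate ha, ?_, fun z hz => ?_⟩
  · rw [← edges_append, hspec]
    exact (rotate_edges c a ha).perm
  · rw [← mem_support_rotate_iff c a ha, ← hspec, mem_support_append_iff] at hz
    exact List.mem_append.2 hz

end SimpleGraph.Walk

open SimpleGraph

section

variable {V : Type*} {G : SimpleGraph V} {u v : V}

lemma AllComponentsMeet.mono {W W' : Set V} (h : AllComponentsMeet G W u v)
    (hW : ∀ z, z ≠ u → z ≠ v → z ∈ W → z ∈ W') : AllComponentsMeet G W' u v := fun x =>
  let ⟨y, hyW, hxy⟩ := h x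
  ⟨y, hW y y.2.1 y.2.2 hyW, hxy⟩

lemma AllComponentsMeet.connected {W : Set V} (h : AllComponentsMeet G W u v)
    (hne : ∃ z, z ≠ u ∧ z ≠ v)
    (hW : ∀ x y : {z // z ≠ u ∧ z ≠ v}, ↑x ∈ W → ↑y ∈ W →
      (G.induce {z | z ≠ u ∧ z ≠ v}).Reachable x y) :
    (G.induce {z | z ≠ u ∧ z ≠ v}).Connected := by
  obtain ⟨z, hz⟩ := hne
  obtain ⟨y₀, hy₀W, -⟩ := h ⟨z, hz⟩
  rw [connected_iff_exists_forall_reachable]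
  refine ⟨y₀, fun x => ?_⟩
  obtain ⟨y, hyW, hxy⟩ := h x
  exact (hW _ _ hy₀W hyW).trans hxy.symm

theorem exists_two_components_of_allComponentsMeet {P : G.Walk u v} {Q : G.Walk v u}
    (hP : P.IsPath) (hQ : Q.IsPath) (hne : ∃ z, z ≠ u ∧ z ≠ v)
    (hdisc : ¬ (G.induce {z | z ≠ u ∧ z ≠ v}).Connected)
    (hmeet : AllComponentsMeet G {z | z ∈ P.support ∨ z ∈ Q.support} u v) :
    2 ≤ P.length ∧ 2 ≤ Q.length ∧
      ∃ K₁ K₂ : (G.induce {z | z ≠ u ∧ z ≠ v}).ConnectedComponent, K₁ ≠ K₂ ∧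
        (∀ x (hxu : x ≠ u) (hxv : x ≠ v), x ∈ P.support →
          (G.induce {z | z ≠ u ∧ z ≠ v}).connectedComponentMk ⟨x, hxu, hxv⟩ = K₁) ∧
        (∀ x (hxu : x ≠ u) (hxv : x ≠ v), x ∈ Q.support →
          (G.induce {z | z ≠ u ∧ z ≠ v}).connectedComponentMk ⟨x, hxu, hxv⟩ = K₂) ∧
        ∀ K, K = K₁ ∨ K = K₂ := by
  set H := G.induce {z | z ≠ u ∧ z ≠ v}
  have hPr : ∀ x y : {z // z ≠ u ∧ z ≠ v}, ↑x ∈ P.support → ↑y ∈ P.support → H.Reachable x y :=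
    fun _ _ => hP.reachable_induce fun _ => Iff.rfl
  have hQr : ∀ x y : {z // z ≠ u ∧ z ≠ v}, ↑x ∈ Q.support → ↑y ∈ Q.support → H.Reachable x y :=
    fun _ _ => hQ.reachable_induce fun _ => and_comm
  obtain ⟨x₁, hx₁⟩ : ∃ x : {z // z ≠ u ∧ z ≠ v}, ↑x ∈ P.support := by
    by_contra! hP₀
    have hmeetQ : AllComponentsMeet G {z | z ∈ Q.support} u v :=
      hmeet.mono fun z hzu hzv hz => hz.resolve_left (hP₀ ⟨z, hzu, hzv⟩)
    exact hdisc (hmeetQ.connected hne hQr)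
  obtain ⟨x₂, hx₂⟩ : ∃ x : {z // z ≠ u ∧ z ≠ v}, ↑x ∈ Q.support := by
    by_contra! hQ₀
    have hmeetP : AllComponentsMeet G {z | z ∈ P.support} u v :=
      hmeet.mono fun z hzu hzv hz => hz.resolve_right (hQ₀ ⟨z, hzu, hzv⟩)
    exact hdisc (hmeetP.connected hne hPr)
  have hPK : ∀ x (hxu : x ≠ u) (hxv : x ≠ v), x ∈ P.support →
      H.connectedComponentMk ⟨x, hxu, hxv⟩ = H.connectedComponentMk x₁ :=
    fun x hxu hxv hx => ConnectedComponent.sound (hPr ⟨x, hxu, hxv⟩ x₁ hx hx₁)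
  have hQK : ∀ x (hxu : x ≠ u) (hxv : x ≠ v), x ∈ Q.support →
      H.connectedComponentMk ⟨x, hxu, hxv⟩ = H.connectedComponentMk x₂ :=
    fun x hxu hxv hx => ConnectedComponent.sound (hQr ⟨x, hxu, hxv⟩ x₂ hx hx₂)
  have hK : ∀ K : H.ConnectedComponent,
      K = H.connectedComponentMk x₁ ∨ K = H.connectedComponentMk x₂ := by
    refine ConnectedComponent.ind fun x => ?_
    obtain ⟨y, hy | hy, hxy⟩ := hmeet x
    · exact Or.inl ((ConnectedComponent.sound hxy).trans (hPK _ y.2.1 y.2.2 hy))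
    · exact Or.inr ((ConnectedComponent.sound hxy).trans (hQK _ y.2.1 y.2.2 hy))
  refine ⟨Walk.two_le_length_of_mem_support hx₁ x₁.2.1 x₁.2.2,
    Walk.two_le_length_of_mem_support hx₂ x₂.2.2 x₂.2.1, _, _, fun h₁₂ => hdisc ?_, hPK, hQK, hK⟩
  refine hmeet.connected hne fun x y _ _ => ConnectedComponent.exact ?_
  rcases hK (H.connectedComponentMk x) with hx | hx <;>
    rcases hK (H.connectedComponentMk y) with hy | hy <;> simp_all

end

theorem external_separation_pair_characterization_general
    {V : Type*} (G : SimpleGraph V)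
    (v₀ : V) (C : G.Walk v₀ v₀) (hC : C.IsCycle)
    (W : Set V) (hW : W = {x | x ∈ C.support})
    (u v : V) (hsep : IsSeparationPair G u v) :
    (u ∈ W ∧ v ∈ W ∧ AllComponentsMeet G W u v)
    ↔
    (u ∈ W ∧ v ∈ W ∧
      ∃ (P : G.Walk u v) (Q : G.Walk v u),
        P.IsPath ∧ Q.IsPath ∧
        2 ≤ P.length ∧ 2 ≤ Q.length ∧
        {x | x ∈ P.support} ∩ {x | x ∈ Q.support} = {u, v} ∧
        (P.edges ++ Q.edges).Perm C.edges ∧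
        ∃ K₁ K₂ : (G.induce {z | z ≠ u ∧ z ≠ v}).ConnectedComponent,
          K₁ ≠ K₂ ∧
          (∀ x (hxu : x ≠ u) (hxv : x ≠ v), x ∈ P.support →
            (G.induce {z | z ≠ u ∧ z ≠ v}).connectedComponentMk ⟨x, hxu, hxv⟩ = K₁) ∧
          (∀ x (hxu : x ≠ u) (hxv : x ≠ v), x ∈ Q.support →
            (G.induce {z | z ≠ u ∧ z ≠ v}).connectedComponentMk ⟨x, hxu, hxv⟩ = K₂) ∧
          (∀ K : (G.induce {z | z ≠ u ∧ z ≠ v}).ConnectedComponent, K = K₁ ∨ K = K₂)) := by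
  obtain ⟨hne, hdisc⟩ := hsep
  subst hW
  constructor
  · rintro ⟨hu, hv, hmeet⟩
    obtain ⟨P, Q, hPQ, hperm, hcover⟩ := hC.exists_isCycle_append hu hv
    have hP := hPQ.isPath_of_append_left (Walk.not_nil_of_ne hne.symm)
    have hQ := hPQ.isPath_of_append_right (Walk.not_nil_of_ne hne)
    obtain ⟨z, -, hz⟩ := hC.exists_mem_support_ne_ne u v
    obtain ⟨hPl, hQl, hK⟩ := exists_two_components_of_allComponentsMeet hP hQ ⟨z, hz⟩ hdisc
      (hmeet.mono fun _ _ _ hx => List.mem_append.1 (hcover hx))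
    exact ⟨hu, hv, P, Q, hP, hQ, hPl, hQl, hPQ.support_inter_support_of_append, hperm, hK⟩
  · rintro ⟨hu, hv, P, Q, hP, hQ, hPl, hQl, -, hperm, K₁, K₂, -, hPK, hQK, hK⟩
    obtain ⟨c, hcP, hcu, hcv⟩ := hP.exists_mem_support_ne_ne hPl
    obtain ⟨d, hdQ, hdv, hdu⟩ := hQ.exists_mem_support_ne_ne hQl
    have hcC := Walk.mem_support_of_edges_subset
      (fun _ he => hperm.subset (List.mem_append_left _ he)) hcP hcu
    have hdC := Walk.mem_support_of_edges_subset
      (fun _ he => hperm.subset (List.mem_append_right _ he)) hdQ hdv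
    refine ⟨hu, hv, fun x => ?_⟩
    rcases hK ((G.induce {z | z ≠ u ∧ z ≠ v}).connectedComponentMk x) with h | h
    · exact ⟨⟨c, hcu, hcv⟩, hcC, ConnectedComponent.exact (h.trans (hPK c hcu hcv hcP).symm)⟩
    · exact ⟨⟨d, hdu, hdv⟩, hdC, ConnectedComponent.exact (h.trans (hQK d hdu hdv hdQ).symm)⟩

/-- Characterization of external separation pairs of a 2-connected plane graph with
outer cycle `C` (with vertex set `W`). A separation pair `{u, v}` is `W`-external,
i.e. `u, v ∈ W` and every component of the graph induced on `V ∖ {u, v}` meets `W`,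
if and only if: `u, v ∈ W`; the cycle `C` decomposes into two internally disjoint paths
`P` from `u` to `v` and `Q` from `v` to `u`, each with at least one interior vertex;
all interior vertices of `P` lie in one component `K₁` of the graph induced on
`V ∖ {u, v}`; all interior vertices of `Q` lie in a component `K₂`; `K₁ ≠ K₂`; and
there are no components other than `K₁` and `K₂`. -/
theorem external_separation_pair_characterization
    {V : Type*} [Fintype V] [DecidableEq V] (G : SimpleGraph V) (h2 : TwoConnected G)
    (v₀ : V) (C : G.Walk v₀ v₀) (hC : C.IsCycle)
    (W : Set V) (hW : W = {x | x ∈ C.support})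
    (u v : V) (hsep : IsSeparationPair G u v) :
    (u ∈ W ∧ v ∈ W ∧ AllComponentsMeet G W u v)
    ↔
    (u ∈ W ∧ v ∈ W ∧
      ∃ (P : G.Walk u v) (Q : G.Walk v u),
        P.IsPath ∧ Q.IsPath ∧
        2 ≤ P.length ∧ 2 ≤ Q.length ∧
        {x | x ∈ P.support} ∩ {x | x ∈ Q.support} = {u, v} ∧
        (P.edges ++ Q.edges).Perm C.edges ∧
        ∃ K₁ K₂ : (G.induce {z | z ≠ u ∧ z ≠ v}).ConnectedComponent,
          K₁ ≠ K₂ ∧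
          (∀ x (hxu : x ≠ u) (hxv : x ≠ v), x ∈ P.support →
            (G.induce {z | z ≠ u ∧ z ≠ v}).connectedComponentMk ⟨x, hxu, hxv⟩ = K₁) ∧
          (∀ x (hxu : x ≠ u) (hxv : x ≠ v), x ∈ Q.support →
            (G.induce {z | z ≠ u ∧ z ≠ v}).connectedComponentMk ⟨x, hxu, hxv⟩ = K₂) ∧
          (∀ K : (G.induce {z | z ≠ u ∧ z ≠ v}).ConnectedComponent, K = K₁ ∨ K = K₂)) :=
  external_separation_pair_characterization_general G v₀ C hC W hW u v hsep
end

section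
/- Let G be a finite simple graph on vertex set V, let W ⊆ V, and suppose G has property (I3) with respect to W: for every vertex w ∉ W there exist three paths in G from w to vertices of W that pairwise intersect only in the vertex w and each of which meets W only in its final endpoint. Let a, b, c ∈ W be three vertices with a ≠ c, {a, b} an edge of G and {b, c} an edge of G. Let G′ be the graph obtained from G by adding one new vertex x adjacent to exactly a, b and c, and let W′ = (W ∖ {b}) ∪ {x}. Then G′ has property (I3) with respect to W′. (This is the combinatorial content of the claim that adding a new vertex in the outer face joined to two consecutive outer edges (a,b), (b,c) preserves internal 3-connectivity, where after the addition b becomes an internal vertex and x an outer vertex.) -/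
/-- The graph obtained from `G` by adding one new vertex (`Option.none`) adjacent to
exactly the vertices of `N`; all other adjacencies are those of `G`. -/
def addApexVertex {V : Type*} (G : SimpleGraph V) (N : Set V) : SimpleGraph (Option V) where
  Adj x y :=
    match x, y with
    | some u, some v => G.Adj u v
    | some u, none => u ∈ N
    | none, some v => v ∈ N
    | none, none => False
  symm := by
    constructor
    intro x y h
    cases x <;> cases y <;> simp_all <;> exact h.symm
  loopless := by
    constructor
    intro x h
    cases x <;> simp_all

/-!
The vertex `b`, which becomes internal, reaches the outer vertices `a`, `c` and the new vertex `x`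
by single edges (`a ≠ c`, and both differ from their neighbour `b`). Every other internal vertex
was already internal in `G`, and its three paths carry over to the new graph; their endpoints are
distinct, so at most one of them ends at `b`, and that one is prolonged by the edge `b x`.
-/

open SimpleGraph

section Apex

variable {V : Type*}

def PropI3At (G : SimpleGraph V) (W : Set V) (w : V) : Prop :=
  ∃ (a b c : V) (P₁ : G.Walk w a) (P₂ : G.Walk w b) (P₃ : G.Walk w c),
    a ∈ W ∧ b ∈ W ∧ c ∈ W ∧
    P₁.IsPath ∧ P₂.IsPath ∧ P₃.IsPath ∧
    (∀ x ∈ P₁.support, x ∈ W → x = a) ∧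
    (∀ x ∈ P₂.support, x ∈ W → x = b) ∧
    (∀ x ∈ P₃.support, x ∈ W → x = c) ∧
    (∀ x ∈ P₁.support, x ∈ P₂.support → x = w) ∧
    (∀ x ∈ P₁.support, x ∈ P₃.support → x = w) ∧
    (∀ x ∈ P₂.support, x ∈ P₃.support → x = w)

def replaceWithApex (W : Set V) (b : V) : Set (Option V) :=
  Option.some '' (W \ {b}) ∪ {none}

def addApexVertexEmbedding (G : SimpleGraph V) (N : Set V) : G ↪g addApexVertex G N :=
  ⟨⟨some, Option.some_injective V⟩, Iff.rfl⟩

variable {G : SimpleGraph V} {N W : Set V} {b : V}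

theorem propI3_iff : PropI3 G W ↔ ∀ w ∉ W, PropI3At G W w :=
  Iff.rfl

@[simp]
theorem some_mem_replaceWithApex {v : V} : some v ∈ replaceWithApex W b ↔ v ∈ W ∧ v ≠ b := by
  simp [replaceWithApex]

@[simp]
theorem none_mem_replaceWithApex : none ∈ replaceWithApex W b :=
  Or.inr rfl

theorem propI3At_of_adj {w x y z : V} (hw : w ∉ W)
    (hx : x ∈ W) (hy : y ∈ W) (hz : z ∈ W) (hxy : x ≠ y) (hxz : x ≠ z) (hyz : y ≠ z)
    (hwx : G.Adj w x) (hwy : G.Adj w y) (hwz : G.Adj w z) : PropI3At G W w := by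
  refine ⟨x, y, z, hwx.toWalk, hwy.toWalk, hwz.toWalk, hx, hy, hz, .of_adj hwx, .of_adj hwy,
    .of_adj hwz, ?_⟩
  simp only [Adj.support_toWalk, List.mem_cons, List.not_mem_nil, or_false, forall_eq_or_imp,
    forall_eq]
  refine ⟨⟨fun h => absurd h hw, ?_⟩, ⟨fun h => absurd h hw, ?_⟩, ⟨fun h => absurd h hw, ?_⟩,
    ?_, ?_, ?_⟩ <;> grind [Adj.ne]

theorem ne_of_forall_mem_support_mem_support {w p q : V} {P : G.Walk w p} {Q : G.Walk w q}
    (hw : w ∉ W) (hp : p ∈ W) (hPQ : ∀ x ∈ P.support, x ∈ Q.support → x = w) : p ≠ q := by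
  rintro rfl
  exact hw (hPQ p P.end_mem_support Q.end_mem_support ▸ hp)

/-- If `p = b`, the lift is prolonged by the edge from `b` to the apex. -/
theorem exists_lift_path (hbN : b ∈ N) {v p : V} {P : G.Walk v p} (hP : P.IsPath)
    (hPW : ∀ y ∈ P.support, y ∈ W → y = p) (hpW : p ∈ W) :
    ∃ (p' : Option V) (P' : (addApexVertex G N).Walk (some v) p'),
      p' ∈ replaceWithApex W b ∧ P'.IsPath ∧
      (∀ y ∈ P'.support, y ∈ replaceWithApex W b → y = p') ∧
      ∀ y ∈ P'.support, (∃ z ∈ P.support, y = some z) ∨ (p = b ∧ y = none) := by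
  set Q : (addApexVertex G N).Walk (some v) (some p) :=
    P.map (addApexVertexEmbedding G N).toHom
  have hQ : Q.IsPath := hP.map (addApexVertexEmbedding G N).injective
  have hQsupp : Q.support = P.support.map some := Walk.support_map _ _
  have hQmem : ∀ y ∈ Q.support, ∃ z ∈ P.support, y = some z := by
    intro y hy
    obtain ⟨z, hz, rfl⟩ := List.mem_map.mp (hQsupp ▸ hy)
    exact ⟨z, hz, rfl⟩
  have hQW : ∀ y ∈ Q.support, y ∈ replaceWithApex W b → y = some p := by
    intro y hy hyW
    obtain ⟨z, hz, rfl⟩ := hQmem y hy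
    rw [some_mem_replaceWithApex] at hyW
    rw [hPW z hz hyW.1]
  by_cases hpb : p = b
  · subst hpb
    have hadj : (addApexVertex G N).Adj (some p) none := hbN
    refine ⟨none, Q.concat hadj, none_mem_replaceWithApex, hQ.concat (by simp [hQsupp]) hadj,
      ?_, ?_⟩ <;> simp only [Walk.support_concat, List.mem_append, List.mem_singleton]
    · rintro y (hy | rfl) hyW
      · simp [hQW y hy hyW] at hyW
      · rfl
    · rintro y (hy | rfl)
      · exact Or.inl (hQmem y hy)
      · simp
  · exact ⟨some p, Q, by simp [hpW, hpb], hQ, hQW, fun y hy => Or.inl (hQmem y hy)⟩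

theorem eq_some_of_mem_lifts {s t : List V} {p q w : V} {x : Option V} (hpq : p ≠ q)
    (hst : ∀ z ∈ s, z ∈ t → z = w)
    (hs : (∃ z ∈ s, x = some z) ∨ (p = b ∧ x = none))
    (ht : (∃ z ∈ t, x = some z) ∨ (q = b ∧ x = none)) : x = some w := by
  rcases hs with ⟨z, hz, rfl⟩ | ⟨rfl, rfl⟩ <;> rcases ht with ⟨z', hz', h⟩ | ⟨rfl, h⟩
  · cases Option.some_injective V h
    rw [hst z hz hz']
  all_goals simp_all

theorem PropI3At.addApexVertex_some (hbN : b ∈ N) {v : V} (hv : v ∉ W)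
    (h : PropI3At G W v) : PropI3At (addApexVertex G N) (replaceWithApex W b) (some v) := by
  obtain ⟨p, q, r, P₁, P₂, P₃, hpW, hqW, hrW, hP₁, hP₂, hP₃, hW₁, hW₂, hW₃, h₁₂, h₁₃, h₂₃⟩ := h
  obtain ⟨p', P₁', hp', hP₁', hW₁', hs₁⟩ := exists_lift_path hbN hP₁ hW₁ hpW
  obtain ⟨q', P₂', hq', hP₂', hW₂', hs₂⟩ := exists_lift_path hbN hP₂ hW₂ hqW
  obtain ⟨r', P₃', hr', hP₃', hW₃', hs₃⟩ := exists_lift_path hbN hP₃ hW₃ hrW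
  have hpq := ne_of_forall_mem_support_mem_support hv hpW h₁₂
  have hpr := ne_of_forall_mem_support_mem_support hv hpW h₁₃
  have hqr := ne_of_forall_mem_support_mem_support hv hqW h₂₃
  exact ⟨p', q', r', P₁', P₂', P₃', hp', hq', hr', hP₁', hP₂', hP₃', hW₁', hW₂', hW₃',
    fun x h₁ h₂ => eq_some_of_mem_lifts hpq h₁₂ (hs₁ x h₁) (hs₂ x h₂),
    fun x h₁ h₃ => eq_some_of_mem_lifts hpr h₁₃ (hs₁ x h₁) (hs₃ x h₃),
    fun x h₂ h₃ => eq_some_of_mem_lifts hqr h₂₃ (hs₂ x h₂) (hs₃ x h₃)⟩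

end Apex

theorem propI3_addApexVertex_claw_general
    {V : Type*} (G : SimpleGraph V) (W : Set V) (hI3 : PropI3 G W)
    (a b c : V) (haW : a ∈ W) (hcW : c ∈ W)
    (hac : a ≠ c) (hab : G.Adj a b) (hbc : G.Adj b c) :
    PropI3 (addApexVertex G {a, b, c})
      ((Option.some '' (W \ {b})) ∪ {Option.none}) := by
  change PropI3 _ (replaceWithApex W b)
  rintro (_ | v) hv
  · exact absurd none_mem_replaceWithApex hv
  rw [some_mem_replaceWithApex] at hv
  obtain rfl | hvb := eq_or_ne v b
  · have hva : (addApexVertex G {a, v, c}).Adj (some v) (some a) := hab.symm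
    have hvc : (addApexVertex G {a, v, c}).Adj (some v) (some c) := hbc
    have hapex : (addApexVertex G {a, v, c}).Adj (some v) none := by
      change v ∈ ({a, v, c} : Set V); simp
    exact propI3At_of_adj (by simp) (by simp [haW, hab.ne]) (by simp [hcW, hbc.ne'])
      none_mem_replaceWithApex (by simpa using hac) (by simp) (by simp) hva hvc hapex
  · have hvW : v ∉ W := fun hvW => hv ⟨hvW, hvb⟩
    exact (propI3_iff.mp hI3 v hvW).addApexVertex_some (by simp) hvW

/-- Adding a new vertex `x` adjacent to three vertices `a`, `b`, `c` of `W`, where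
`{a, b}` and `{b, c}` are consecutive edges of the outer face, preserves property (I3):
the new graph has property (I3) with respect to `W' = (W ∖ {b}) ∪ {x}` (the vertex `b`
becomes internal and `x` becomes an outer vertex). -/
theorem propI3_addApexVertex_claw
    {V : Type*} (G : SimpleGraph V) (W : Set V) (hI3 : PropI3 G W)
    (a b c : V) (haW : a ∈ W) (hbW : b ∈ W) (hcW : c ∈ W)
    (hac : a ≠ c) (hab : G.Adj a b) (hbc : G.Adj b c) :
    PropI3 (addApexVertex G {a, b, c})
      ((Option.some '' (W \ {b})) ∪ {Option.none}) :=
  propI3_addApexVertex_claw_general G W hI3 a b c haW hcW hac hab hbc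
end

section
/- Let G be a finite 2-connected simple graph on vertex set V, let C be a cycle in G with vertex set W, and let a, b ∈ W be distinct vertices with {a, b} not an edge of G, such that C is the union of two internally disjoint paths P and Q from a to b. Suppose that every separation pair {u, v} of G is W-external (that is, u, v ∈ W and every connected component of the subgraph induced on V ∖ {u, v} contains a vertex of W), and additionally that no vertex of P (including a and b) belongs to any separation pair of G. Let G′ be the graph obtained from G by adding the edge {a, b}, and let W′ = W ∖ (the set of interior vertices of P). Then every separation pair {u, v} of G′ satisfies: u ∈ W′, v ∈ W′, and every connected component of the subgraph of G′ induced on V ∖ {u, v} contains a vertex of W′. (This is the combinatorial content of the claim that adding the edge (a, b), embedded so that the path P becomes internal, preserves internal 3-connectivity with respect to the new outer face formed by Q together with the edge {a, b}.) -/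
/-- The pair `{u, v}` is `W`-external in `G`: both vertices lie in `W` and every
connected component of the graph induced on `V ∖ {u, v}` contains a vertex of `W`. -/
def IsWExternal {V : Type*} (G : SimpleGraph V) (W : Set V) (u v : V) : Prop :=
  u ∈ W ∧ v ∈ W ∧
  ∀ x : {z : V // z ≠ u ∧ z ≠ v},
    ∃ y : {z : V // z ≠ u ∧ z ≠ v}, (y : V) ∈ W ∧
      (G.induce {z | z ≠ u ∧ z ≠ v}).Reachable x y

/-!
Adding an edge can only merge components, so a separation pair `{p, q}` of `G + ab` is one of
`G`; by hypothesis it is then `W`-external in `G` and disjoint from `P`. Every component of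
`G - p - q` meets `W`, and one that meets `W` on `P` contains the whole path, in particular
`a ∈ W'`.
-/

namespace SimpleGraph

variable {V : Type*} {G H : SimpleGraph V}

lemma induce_le_induce_of_le (h : G ≤ H) (s : Set V) : G.induce s ≤ H.induce s :=
  fun _ _ hadj => h hadj

lemma Walk.reachable_induce_of_mem_support {u v y : V} (w : G.Walk u v) {s : Set V}
    (hs : ∀ x ∈ w.support, x ∈ s) (hy : y ∈ w.support) :
    (G.induce s).Reachable ⟨y, hs y hy⟩ ⟨u, hs u w.start_mem_support⟩ :=
  (w.connected_induce_support.preconnected ⟨y, hy⟩ ⟨u, w.start_mem_support⟩).map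
    (G.induceHomOfLE hs).toHom

end SimpleGraph

section

open SimpleGraph

variable {V : Type*} {G H : SimpleGraph V} {p q : V}

lemma IsSeparationPair.of_le (hle : G ≤ H) (h : IsSeparationPair H p q) :
    IsSeparationPair G p q :=
  ⟨h.1, fun hconn => h.2 (hconn.mono (induce_le_induce_of_le hle _))⟩

lemma IsWExternal.of_le_of_reachable {W W' : Set V} (hle : G ≤ H) (hp : p ∈ W') (hq : q ∈ W')
    (hreach : ∀ y : {z : V // z ≠ p ∧ z ≠ q}, (y : V) ∈ W →
      ∃ y' : {z : V // z ≠ p ∧ z ≠ q}, (y' : V) ∈ W' ∧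
        (H.induce {z | z ≠ p ∧ z ≠ q}).Reachable y y')
    (h : IsWExternal G W p q) : IsWExternal H W' p q := by
  refine ⟨hp, hq, fun x => ?_⟩
  obtain ⟨y, hyW, hxy⟩ := h.2.2 x
  obtain ⟨y', hy'W', hyy'⟩ := hreach y hyW
  exact ⟨y', hy'W', (hxy.mono (induce_le_induce_of_le hle _)).trans hyy'⟩

end

theorem add_edge_preserves_external_separation_pairs_general
    {V : Type*} (G : SimpleGraph V)
    (a b : V)
    (P Q : G.Walk a b)
    (W : Set V) (hW : W = {x | x ∈ P.support} ∪ {x | x ∈ Q.support})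
    (hext : ∀ p q : V, IsSeparationPair G p q → IsWExternal G W p q)
    (hPsep : ∀ x ∈ P.support, ∀ y : V,
      ¬ IsSeparationPair G x y ∧ ¬ IsSeparationPair G y x) :
    ∀ p q : V,
      IsSeparationPair (G ⊔ SimpleGraph.fromEdgeSet {s(a, b)}) p q →
      IsWExternal (G ⊔ SimpleGraph.fromEdgeSet {s(a, b)})
        (W \ {x | x ∈ P.support ∧ x ≠ a ∧ x ≠ b}) p q := by
  intro p q hsep
  have hsepG : IsSeparationPair G p q := hsep.of_le le_sup_left
  have hpP : p ∉ P.support := fun h => (hPsep p h q).1 hsepG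
  have hqP : q ∉ P.support := fun h => (hPsep q h p).2 hsepG
  have hPavoid : ∀ x ∈ P.support, x ∈ {z | z ≠ p ∧ z ≠ q} := fun x hx =>
    ⟨fun h => hpP (h ▸ hx), fun h => hqP (h ▸ hx)⟩
  have hext' := hext p q hsepG
  refine hext'.of_le_of_reachable le_sup_left ⟨hext'.1, fun h => hpP h.1⟩
    ⟨hext'.2.1, fun h => hqP h.1⟩ fun y hyW => ?_
  by_cases hyP : (y : V) ∈ P.support
  · refine ⟨⟨a, hPavoid a P.start_mem_support⟩,
      ⟨hW ▸ Or.inl P.start_mem_support, fun h => h.2.1 rfl⟩, ?_⟩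
    exact (P.reachable_induce_of_mem_support hPavoid hyP).mono
      (SimpleGraph.induce_le_induce_of_le le_sup_left _)
  · exact ⟨y, ⟨hyW, fun h => hyP h.1⟩, .rfl⟩

/-- Let `G` be 2-connected, let the cycle `C = P ++ Q.reverse` (with vertex set `W`) be
the union of two internally disjoint paths `P, Q` from `a` to `b`, where `{a, b}` is not
an edge of `G`. If every separation pair of `G` is `W`-external and no vertex of `P`
(including `a` and `b`) belongs to any separation pair of `G`, then in the graph `G'`
obtained by adding the edge `{a, b}` every separation pair is `W'`-external, where
`W' = W ∖ (interior vertices of P)` (the path `P` becomes internal). -/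
theorem add_edge_preserves_external_separation_pairs
    {V : Type*} [Fintype V] (G : SimpleGraph V) (h2 : TwoConnected G)
    (a b : V) (hab : a ≠ b) (hnadj : ¬ G.Adj a b)
    (P Q : G.Walk a b) (hP : P.IsPath) (hQ : Q.IsPath)
    (hcyc : (P.append Q.reverse).IsCycle)
    (W : Set V) (hW : W = {x | x ∈ P.support} ∪ {x | x ∈ Q.support})
    (hext : ∀ p q : V, IsSeparationPair G p q → IsWExternal G W p q)
    (hPsep : ∀ x ∈ P.support, ∀ y : V,
      ¬ IsSeparationPair G x y ∧ ¬ IsSeparationPair G y x) :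
    ∀ p q : V,
      IsSeparationPair (G ⊔ SimpleGraph.fromEdgeSet {s(a, b)}) p q →
      IsWExternal (G ⊔ SimpleGraph.fromEdgeSet {s(a, b)})
        (W \ {x | x ∈ P.support ∧ x ≠ a ∧ x ≠ b}) p q :=
  add_edge_preserves_external_separation_pairs_general G a b P Q W hW hext hPsep
end
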